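/- Let W be a real vector space of dimension n ≥ 3 and F a real vector space. Suppose α : W × W → F is an alternating bilinear map such that α(y, z) ⊗ x − α(x, z) ⊗ y + α(x, y) ⊗ z = 0 in F ⊗ W for all x, y, z ∈ W. Then α = 0. -/

import Mathlib

/-!
Given `x, y ∈ W`, since `dim W ≥ 3` there is a linear form `φ ≠ 0` vanishing at `x` and `y`;
pick `z` with `φ z ≠ 0`. Contracting the identity for `(x, y, z)` with `φ` in the `W` factor
leaves `φ z • α(x, y) = 0`.
-/

open TensorProduct

theorem Module.exists_dual_ne_zero_apply_eq_zero_of_two_lt_finrank {K W : Type*} [Field K]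
    [AddCommGroup W] [Module K W] (hn : 2 < finrank K W) (x y : W) :
    ∃ φ : Module.Dual K W, φ ≠ 0 ∧ φ x = 0 ∧ φ y = 0 := by
  have hlt : Submodule.span K (Set.range ![x, y]) < ⊤ :=
    lt_top_iff_ne_top.2 fun htop => by simpa using hn.trans_le (finrank_le_of_span_eq_top htop)
  obtain ⟨φ, hφ, hle⟩ := (Submodule.span K (Set.range ![x, y])).exists_le_ker_of_lt_top hlt
  exact ⟨φ, hφ, hle (Submodule.subset_span ⟨0, rfl⟩), hle (Submodule.subset_span ⟨1, rfl⟩)⟩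

theorem TensorProduct.smul_eq_zero_of_tmul_sub_tmul_add_tmul_eq_zero {R M N : Type*}
    [CommRing R] [AddCommGroup M] [Module R M] [AddCommGroup N] [Module R N]
    {a b c : M} {x y z : N} (h : a ⊗ₜ[R] x - b ⊗ₜ[R] y + c ⊗ₜ[R] z = 0)
    {φ : N →ₗ[R] R} (hx : φ x = 0) (hy : φ y = 0) :
    φ z • c = 0 := by
  simpa [hx, hy] using congrArg ((TensorProduct.rid R M).toLinearMap ∘ₗ φ.lTensor M) h

theorem alternating_tensor_cocycle_eq_zero
    (W F : Type*) [AddCommGroup W] [Module ℝ W] [AddCommGroup F] [Module ℝ F]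
    (hn : 3 ≤ Module.finrank ℝ W)
    (α : W [⋀^Fin 2]→ₗ[ℝ] F)
    (h : ∀ x y z : W,
      α ![y, z] ⊗ₜ[ℝ] x - α ![x, z] ⊗ₜ[ℝ] y + α ![x, y] ⊗ₜ[ℝ] z = (0 : F ⊗[ℝ] W)) :
    α = 0 := by
  have hα : ∀ x y : W, α ![x, y] = 0 := fun x y => by
    obtain ⟨φ, hφ, hx, hy⟩ := Module.exists_dual_ne_zero_apply_eq_zero_of_two_lt_finrank hn x y
    obtain ⟨z, hz⟩ := DFunLike.ne_iff.1 hφ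
    exact (smul_eq_zero.1 (smul_eq_zero_of_tmul_sub_tmul_add_tmul_eq_zero (h x y z) hx hy))
      |>.resolve_left hz
  ext m
  rw [← FinVec.etaExpand_eq m]
  exact hα (m 0) (m 1)
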